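/- Let w ∈ W_n^{(k)}, let a > b > 0 be integers such that b is an entry of w at a position ≤ k, −a is an entry of w at a position > k, and every integer c with b < c < a is a positive entry of w at a position > k (i.e., all intermediate values belong to the v's). Then the permutation w' obtained from w by replacing b with a among positions ≤ k and −a with −b among positions > k (each group reordered increasingly) belongs to W_n^{(k)}, and w covers w'. -/

import Mathlib

/-- The hyperoctahedral group `W_n`: bijections `w : ℤ → ℤ` with `w (-i) = -w i`
and `w i = i` whenever `n < |i|`. -/
def SignedPerm (n : ℕ) (w : ℤ → ℤ) : Prop :=
  Function.Bijective w ∧ (∀ i : ℤ, w (-i) = -w i) ∧ (∀ i : ℤ, (n : ℤ) < |i| → w i = i)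

/-- The number of inversions `#{(i,j) : 1 ≤ i < j ≤ n, w i > w j}`. -/
noncomputable def invCount (n : ℕ) (w : ℤ → ℤ) : ℕ :=
  ((Finset.Icc (1 : ℤ) (n : ℤ) ×ˢ Finset.Icc (1 : ℤ) (n : ℤ)).filter
    (fun p => p.1 < p.2 ∧ w p.2 < w p.1)).card

/-- The length `ℓ(w) = inv(w) - Σ_{1 ≤ j ≤ n, w j < 0} w j`. -/
noncomputable def len (n : ℕ) (w : ℤ → ℤ) : ℤ :=
  (invCount n w : ℤ) - ∑ j ∈ (Finset.Icc (1 : ℤ) (n : ℤ)).filter (fun j => w j < 0), w j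

/-- `w` is `k`-Grassmannian: `0 < w 1 < ⋯ < w k` and `w (k+1) < ⋯ < w n`. -/
def Grassmannian (n k : ℕ) (w : ℤ → ℤ) : Prop :=
  SignedPerm n w ∧
  (∀ i : ℤ, 1 ≤ i → i ≤ (k : ℤ) → 0 < w i) ∧
  (∀ i j : ℤ, 1 ≤ i → i < j → j ≤ (k : ℤ) → w i < w j) ∧
  (∀ i j : ℤ, (k : ℤ) < i → i < j → j ≤ (n : ℤ) → w i < w j)

/-- A reflection of `W_n`: either the transposition pair `(i j)(-i -j)` with
`1 ≤ i < |j| ≤ n`, or the sign change `i ↔ -i` with `1 ≤ i ≤ n`. -/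
def IsReflection (n : ℕ) (t : ℤ → ℤ) : Prop :=
  (∃ i j : ℤ, 1 ≤ i ∧ i < |j| ∧ |j| ≤ (n : ℤ) ∧
    t = fun m => if m = i then j else if m = j then i
      else if m = -i then -j else if m = -j then -i else m) ∨
  (∃ i : ℤ, 1 ≤ i ∧ i ≤ (n : ℤ) ∧
    t = fun m => if m = i then -i else if m = -i then i else m)

/-- `w` covers `w'` in the Bruhat order: `w' = w ∘ t` for a reflection `t` and
`ℓ(w) = ℓ(w') + 1`. -/
def Covers (n : ℕ) (w w' : ℤ → ℤ) : Prop :=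
  ∃ t : ℤ → ℤ, IsReflection n t ∧ w' = w ∘ t ∧ len n w = len n w' + 1

/-- Multiset of entries of `w` at positions `1, …, k`. -/
noncomputable def entriesLow (k : ℕ) (w : ℤ → ℤ) : Multiset ℤ :=
  (Finset.Icc (1 : ℤ) (k : ℤ)).val.map w

/-- Multiset of entries of `w` at positions `k+1, …, n`. -/
noncomputable def entriesHigh (n k : ℕ) (w : ℤ → ℤ) : Multiset ℤ :=
  (Finset.Icc ((k : ℤ) + 1) (n : ℤ)).val.map w

/-- `d_i = #{j : λ_j > u_i}`, the number of negative entries of `w` at positions `> k`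
whose absolute value exceeds `w i`. -/
noncomputable def dcount (n k : ℕ) (w : ℤ → ℤ) (i : ℤ) : ℕ :=
  ((Finset.Icc ((k : ℤ) + 1) (n : ℤ)).filter (fun j => w j < 0 ∧ w i < -(w j))).card

/-- `μ_i = #{j : v_j > u_i}`, the number of positive entries of `w` at positions `> k`
exceeding `w i`. -/
noncomputable def mucount (n k : ℕ) (w : ℤ → ℤ) (i : ℤ) : ℕ :=
  ((Finset.Icc ((k : ℤ) + 1) (n : ℤ)).filter (fun j => 0 < w j ∧ w i < w j)).card

/-- `α_i = u_i - i + d_i`. -/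
noncomputable def alphaPart (n k : ℕ) (w : ℤ → ℤ) (i : ℤ) : ℤ :=
  w i - i + (dcount n k w i : ℤ)

/-- Pair of type B1: `w'` is obtained from `w` by replacing the entry `-1`
(at a position `> k`) by `1`. -/
def TypeB1 (n k : ℕ) (w w' : ℤ → ℤ) : Prop :=
  Grassmannian n k w ∧ Grassmannian n k w' ∧
  (-1 : ℤ) ∈ entriesHigh n k w ∧
  entriesLow k w' = entriesLow k w ∧
  entriesHigh n k w' = 1 ::ₘ (entriesHigh n k w).erase (-1)

/-- Pair of type B2: for some `a > 1`, `w'` is obtained from `w` by replacing the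
entries `-a` and `a-1` (at positions `> k`) by `-(a-1)` and `a`. -/
def TypeB2 (n k : ℕ) (w w' : ℤ → ℤ) : Prop :=
  Grassmannian n k w ∧ Grassmannian n k w' ∧
  ∃ a : ℤ, 1 < a ∧ (-a) ∈ entriesHigh n k w ∧ (a - 1) ∈ entriesHigh n k w ∧
    entriesLow k w' = entriesLow k w ∧
    entriesHigh n k w' =
      a ::ₘ (-(a - 1)) ::ₘ (((entriesHigh n k w).erase (-a)).erase (a - 1))

/-- Pair of type B3: for some `a > x > 0`, `w'` is obtained from `w` by exchanging
the entry `a` (at a position `≤ k`) with the entry `a - x` (at a position `> k`). -/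
def TypeB3 (n k : ℕ) (w w' : ℤ → ℤ) : Prop :=
  Grassmannian n k w ∧ Grassmannian n k w' ∧
  ∃ a x : ℤ, 0 < x ∧ x < a ∧
    a ∈ entriesLow k w ∧ (a - x) ∈ entriesHigh n k w ∧
    entriesLow k w' = (a - x) ::ₘ (entriesLow k w).erase a ∧
    entriesHigh n k w' = a ::ₘ (entriesHigh n k w).erase (a - x)

/-- Pair of type B4: for some `a > x > 0`, `w'` is obtained from `w` by replacing
the entry `a - x` (at a position `≤ k`) by `a` and the entry `-a` (at a position `> k`)
by `-(a-x)`. -/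
def TypeB4 (n k : ℕ) (w w' : ℤ → ℤ) : Prop :=
  Grassmannian n k w ∧ Grassmannian n k w' ∧
  ∃ a x : ℤ, 0 < x ∧ x < a ∧
    (a - x) ∈ entriesLow k w ∧ (-a) ∈ entriesHigh n k w ∧
    entriesLow k w' = a ::ₘ (entriesLow k w).erase (a - x) ∧
    entriesHigh n k w' = (-(a - x)) ::ₘ (entriesHigh n k w).erase (-a)

/-- The longest element `w₀` of `W_n^{(k)}`: `w₀ i = i` for `1 ≤ i ≤ k` and
`w₀ i = -(n + k + 1 - i)` for `k < i ≤ n` (extended to a signed permutation of `ℤ`). -/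
def w0 (n k : ℕ) : ℤ → ℤ := fun i =>
  if (k : ℤ) < i ∧ i ≤ (n : ℤ) then -((n : ℤ) + (k : ℤ) + 1 - i)
  else if -(n : ℤ) ≤ i ∧ i < -(k : ℤ) then (n : ℤ) + (k : ℤ) + 1 + i
  else i

/-- The simple reflection `s_i`: for `i = 0` the sign change `1 ↔ -1`, and for `i ≥ 1`
the swap `i ↔ i+1`, `-i ↔ -(i+1)`. -/
def simpleRefl (i : ℕ) : ℤ → ℤ :=
  if i = 0 then fun m => if m = 1 then -1 else if m = -1 then 1 else m
  else fun m =>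
    if m = (i : ℤ) then (i : ℤ) + 1 else if m = (i : ℤ) + 1 then (i : ℤ)
    else if m = -(i : ℤ) then -(i : ℤ) - 1 else if m = -(i : ℤ) - 1 then -(i : ℤ) else m

/-! Let `w p = b` with `p ≤ k` and `w q = -a` with `q > k`. The cover is `w' = w ∘ t` for the
reflection `t = (p, -q)(-p, q)`, which puts `a` at position `p` and `-b` at position `q`. The
gap hypothesis says that no entry of `w` has absolute value in `[b, a]` except `b`, `-a` and the
positive entries in `(b, a)`, which all sit after position `k`. Hence both blocks of `w'` stay
increasing, and the inversions of `w'` are those of `w` together with the `a - b - 1` pairs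
`(p, j)` with `b < w j < a`; meanwhile the sum of the negative entries rises by `a - b`, so the
length drops by exactly one. -/

open Finset

def transposePair (i j : ℤ) : ℤ → ℤ := fun m =>
  if m = i then j else if m = j then i else if m = -i then -j else if m = -j then -i else m

section TransposePair

variable {i j : ℤ}

theorem transposePair_apply_left : transposePair i j i = j := by
  simp [transposePair]

theorem transposePair_apply_neg_right (hi : 0 < i) (hij : i < |j|) :
    transposePair i j (-j) = -i := by
  have := lt_abs.mp hij
  simp only [transposePair]; split_ifs <;> omega

theorem transposePair_apply_of_ne {m : ℤ} (h₁ : m ≠ i) (h₂ : m ≠ j) (h₃ : m ≠ -i)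
    (h₄ : m ≠ -j) : transposePair i j m = m := by
  simp [transposePair, h₁, h₂, h₃, h₄]

theorem transposePair_neg (hi : 0 < i) (hij : i < |j|) (m : ℤ) :
    transposePair i j (-m) = -transposePair i j m := by
  have := lt_abs.mp hij
  simp only [transposePair]; split_ifs <;> omega

theorem transposePair_involutive (hi : 0 < i) (hij : i < |j|) :
    Function.Involutive (transposePair i j) := by
  intro m
  have := lt_abs.mp hij
  simp only [transposePair]; split_ifs <;> omega

theorem isReflection_transposePair {n : ℕ} (hi : 1 ≤ i) (hij : i < |j|) (hjn : |j| ≤ n) :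
    IsReflection n (transposePair i j) :=
  Or.inl ⟨i, j, hi, hij, hjn, rfl⟩

theorem signedPerm_transposePair {n : ℕ} (hi : 1 ≤ i) (hij : i < |j|) (hjn : |j| ≤ n) :
    SignedPerm n (transposePair i j) := by
  refine ⟨(transposePair_involutive (by omega) hij).bijective,
    transposePair_neg (by omega) hij, fun m hm => ?_⟩
  have := lt_abs.mp hij
  have := lt_abs.mp hm
  have := abs_le.mp hjn
  exact transposePair_apply_of_ne (by omega) (by omega) (by omega) (by omega)

end TransposePair

theorem SignedPerm.comp {n : ℕ} {w t : ℤ → ℤ} (hw : SignedPerm n w) (ht : SignedPerm n t) :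
    SignedPerm n (w ∘ t) :=
  ⟨hw.1.comp ht.1, fun i => by simp [ht.2.1 i, hw.2.1],
    fun i hi => by simp [ht.2.2 i hi, hw.2.2 i hi]⟩

theorem Multiset.map_eq_cons_erase_map {α β : Type*} [DecidableEq α] [DecidableEq β]
    {s : Multiset α} (hs : s.Nodup) {u v : α → β} {p : α} (hp : p ∈ s)
    (h : ∀ x ∈ s, x ≠ p → v x = u x) :
    s.map v = v p ::ₘ (s.map u).erase (u p) := by
  rw [← Multiset.cons_erase hp] at hs h ⊢
  have hp' : p ∉ s.erase p := (Multiset.nodup_cons.mp hs).1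
  rw [Multiset.map_cons, Multiset.map_cons, Multiset.erase_cons_head]
  congr 1
  exact Multiset.map_congr rfl fun x hx =>
    h x (Multiset.mem_cons_of_mem hx) (ne_of_mem_of_not_mem hx hp')

theorem invCount_eq_add_card {n : ℕ} {w w' : ℤ → ℤ} {p : ℤ} {S : Finset ℤ}
    (hp : p ∈ Icc 1 (n : ℤ)) (hS : S ⊆ Icc 1 (n : ℤ))
    (hSp : ∀ j ∈ S, ¬(p < j ∧ w j < w p))
    (h : ∀ i ∈ Icc 1 (n : ℤ), ∀ j ∈ Icc 1 (n : ℤ),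
      (i < j ∧ w' j < w' i ↔ (i < j ∧ w j < w i) ∨ (i = p ∧ j ∈ S))) :
    invCount n w' = invCount n w + #S := by
  have hrow :
      {x ∈ Icc 1 (n : ℤ) ×ˢ Icc 1 (n : ℤ) | x.1 = p ∧ x.2 ∈ S} = {p} ×ˢ S := by
    ext ⟨i, j⟩
    simp only [mem_filter, mem_product, mem_singleton]
    constructor
    · rintro ⟨-, hi, hj⟩; exact ⟨hi, hj⟩
    · rintro ⟨rfl, hj⟩; exact ⟨⟨hp, hS hj⟩, rfl, hj⟩
  have hdisj : Disjoint {x ∈ Icc 1 (n : ℤ) ×ˢ Icc 1 (n : ℤ) | x.1 < x.2 ∧ w x.2 < w x.1}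
      {x ∈ Icc 1 (n : ℤ) ×ˢ Icc 1 (n : ℤ) | x.1 = p ∧ x.2 ∈ S} := by
    rw [disjoint_filter]
    rintro ⟨i, j⟩ - hinv ⟨rfl, hj⟩
    exact hSp j hj hinv
  unfold invCount
  rw [filter_congr fun x hx => h x.1 (mem_product.mp hx).1 x.2 (mem_product.mp hx).2,
    filter_or, card_union_of_disjoint hdisj, hrow, card_product, card_singleton, one_mul]

theorem card_filter_apply_mem {s T : Finset ℤ} {w : ℤ → ℤ} (hw : Set.InjOn w s)
    (hT : ∀ c ∈ T, ∃ j ∈ s, w j = c) :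
    #{j ∈ s | w j ∈ T} = #T := by
  rw [← card_image_of_injOn (hw.mono (coe_subset.mpr (filter_subset _ s)))]
  congr 1
  ext c
  simp only [mem_image, mem_filter]
  constructor
  · rintro ⟨j, ⟨-, hj⟩, rfl⟩; exact hj
  · intro hc
    obtain ⟨j, hj, rfl⟩ := hT c hc
    exact ⟨j, ⟨hj, hc⟩, rfl⟩

structure TypeB4Position (n k : ℕ) (w : ℤ → ℤ) (a b p q : ℤ) : Prop where
  grassmannian : Grassmannian n k w
  one_le_p : 1 ≤ p
  p_le_k : p ≤ k
  k_lt_q : k < q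
  q_le_n : q ≤ n
  apply_p : w p = b
  apply_q : w q = -a
  b_pos : 0 < b
  b_lt_a : b < a
  mem_between : ∀ c, b < c → c < a → c ∈ entriesHigh n k w

namespace TypeB4Position

variable {n k : ℕ} {w : ℤ → ℤ} {a b p q : ℤ}

theorem exists_index_of_between (h : TypeB4Position n k w a b p q) {c : ℤ} (hbc : b < c)
    (hca : c < a) : ∃ j, (k : ℤ) < j ∧ j ≤ n ∧ w j = c := by
  obtain ⟨j, hj, rfl⟩ := Multiset.mem_map.mp (h.mem_between c hbc hca)
  rw [mem_val, mem_Icc] at hj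
  exact ⟨j, by omega, hj.2, rfl⟩

theorem position_cases (h : TypeB4Position n k w a b p q) {m : ℤ} (hm : 1 ≤ m) (hmn : m ≤ n) :
    m = p ∨ m = q ∨
      (m ≤ k ∧ 0 < w m ∧ (m < p ↔ w m < b) ∧ (w m < b ∨ a < w m)) ∨
      (k < m ∧ w m ≠ b ∧ (m < q ↔ w m < -a) ∧ (w m < -a ∨ -b < w m)) := by
  obtain ⟨⟨⟨⟨hinj, -⟩, hodd, -⟩, hpos, hlow, hhigh⟩, hp1, hpk, hkq, hqn, hwp, hwq, hb, hba, -⟩ :=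
    id h
  by_cases hmp : m = p; · exact Or.inl hmp
  by_cases hmq : m = q; · exact Or.inr (Or.inl hmq)
  right; right
  have hne : ∀ x, m ≠ x → w m ≠ w x := fun x hx he => hx (hinj he)
  have hma : w m ≠ a := by simpa [hodd, hwq] using hne (-q) (by omega)
  have hmb : w m ≠ b := hwp ▸ hne p hmp
  have hmna : w m ≠ -a := hwq ▸ hne q hmq
  have hmnb : w m ≠ -b := by simpa [hodd, hwp] using hne (-p) (by omega)
  have hbetween : ¬(b < w m ∧ w m < a) ∨ k < m := by
    by_cases hc : b < w m ∧ w m < a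
    · obtain ⟨j, hkj, -, hj⟩ := h.exists_index_of_between hc.1 hc.2
      exact Or.inr (by rw [hinj hj] at hkj; exact hkj)
    · exact Or.inl hc
  have hnbetween : ¬(-a < w m ∧ w m < -b) := by
    rintro ⟨h₁, h₂⟩
    obtain ⟨j, hkj, -, hj⟩ := h.exists_index_of_between (c := -w m) (by omega) (by omega)
    have := hinj (hj.trans (hodd m).symm)
    omega
  rcases le_or_gt m k with hmk | hmk
  · have := hpos m hm hmk
    rcases lt_or_gt_of_ne hmp with hlt | hlt
    · have := hlow m p hm hlt hpk
      omega
    · have := hlow p m hp1 hlt hmk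
      omega
  · rcases lt_or_gt_of_ne hmq with hlt | hlt
    · have := hhigh m q hmk hlt hqn
      omega
    · have := hhigh q m hkq hlt hmn
      omega

theorem abs_neg_q (h : TypeB4Position n k w a b p q) : |-q| = q := by
  rw [abs_neg, abs_of_pos (by have := h.k_lt_q; omega)]

theorem isReflection (h : TypeB4Position n k w a b p q) :
    IsReflection n (transposePair p (-q)) :=
  isReflection_transposePair h.one_le_p
    (by rw [h.abs_neg_q]; have := h.k_lt_q; have := h.p_le_k; omega)
    (by rw [h.abs_neg_q]; exact h.q_le_n)

theorem comp_apply_p (h : TypeB4Position n k w a b p q) :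
    (w ∘ transposePair p (-q)) p = a := by
  rw [Function.comp_apply, transposePair_apply_left, h.grassmannian.1.2.1, h.apply_q, neg_neg]

theorem comp_apply_q (h : TypeB4Position n k w a b p q) :
    (w ∘ transposePair p (-q)) q = -b := by
  have hpq : p < |-q| := by rw [h.abs_neg_q]; have := h.p_le_k; have := h.k_lt_q; omega
  have := transposePair_apply_neg_right (by have := h.one_le_p; omega) hpq
  rw [neg_neg] at this
  rw [Function.comp_apply, this, h.grassmannian.1.2.1, h.apply_p]

theorem comp_apply_of_ne (h : TypeB4Position n k w a b p q) {m : ℤ} (hm : 0 < m) (hmp : m ≠ p)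
    (hmq : m ≠ q) : (w ∘ transposePair p (-q)) m = w m := by
  have := h.one_le_p
  have := h.k_lt_q
  rw [Function.comp_apply, transposePair_apply_of_ne hmp (by omega) (by omega) (by omega)]

theorem comp_apply (h : TypeB4Position n k w a b p q) {m : ℤ} (hm : 0 < m) :
    (w ∘ transposePair p (-q)) m = if m = p then a else if m = q then -b else w m := by
  split_ifs with hmp hmq
  · rw [hmp, h.comp_apply_p]
  · rw [hmq, h.comp_apply_q]
  · exact h.comp_apply_of_ne hm hmp hmq

theorem grassmannian_comp (h : TypeB4Position n k w a b p q) :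
    Grassmannian n k (w ∘ transposePair p (-q)) := by
  obtain ⟨⟨hw, hpos, hlow, hhigh⟩, hp, hpk, hkq, hqn, -, -, hb, hba, -⟩ := id h
  refine ⟨hw.comp (signedPerm_transposePair hp ?_ ?_), fun i hi hik => ?_,
    fun i j hi hij hjk => ?_, fun i j hki hij hjn => ?_⟩
  · rw [h.abs_neg_q]; omega
  · rw [h.abs_neg_q]; exact hqn
  · have := hpos i hi hik
    rw [h.comp_apply (by omega)]
    split_ifs <;> omega
  · have := h.position_cases hi (by omega)
    have := h.position_cases (m := j) (by omega) (by omega)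
    have := hlow i j hi hij hjk
    rw [h.comp_apply (by omega), h.comp_apply (by omega)]
    split_ifs <;> omega
  · have := h.position_cases (m := i) (by omega) (by omega)
    have := h.position_cases (m := j) (by omega) hjn
    have := hhigh i j hki hij hjn
    rw [h.comp_apply (by omega), h.comp_apply (by omega)]
    split_ifs <;> omega

theorem lt_and_comp_lt_iff (h : TypeB4Position n k w a b p q) {i j : ℤ}
    (hi : i ∈ Icc 1 (n : ℤ)) (hj : j ∈ Icc 1 (n : ℤ)) :
    i < j ∧ (w ∘ transposePair p (-q)) j < (w ∘ transposePair p (-q)) i ↔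
      (i < j ∧ w j < w i) ∨ (i = p ∧ j ∈ {j ∈ Icc 1 (n : ℤ) | w j ∈ Ioo b a}) := by
  rw [mem_Icc] at hi hj
  have := h.position_cases hi.1 hi.2
  have := h.position_cases hj.1 hj.2
  obtain ⟨-, hp, hpk, hkq, -, hwp, hwq, hb, hba, -⟩ := id h
  simp only [mem_filter, mem_Icc, mem_Ioo]
  rw [h.comp_apply (by omega), h.comp_apply (by omega)]
  split_ifs <;> subst_vars <;> omega

theorem card_between (h : TypeB4Position n k w a b p q) :
    #{j ∈ Icc 1 (n : ℤ) | w j ∈ Ioo b a} = a - b - 1 := by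
  rw [card_filter_apply_mem h.grassmannian.1.1.1.injOn, Int.card_Ioo,
    Int.toNat_of_nonneg (by have := h.b_lt_a; omega)]
  intro c hc
  rw [mem_Ioo] at hc
  obtain ⟨j, hkj, hjn, hj⟩ := h.exists_index_of_between hc.1 hc.2
  exact ⟨j, mem_Icc.mpr ⟨by omega, hjn⟩, hj⟩

theorem sum_neg_entries_comp (h : TypeB4Position n k w a b p q) :
    ∑ j ∈ Icc 1 (n : ℤ) with (w ∘ transposePair p (-q)) j < 0,
        (w ∘ transposePair p (-q)) j =
      ∑ j ∈ Icc 1 (n : ℤ) with w j < 0, w j + (a - b) := by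
  have hb := h.b_pos
  have hba := h.b_lt_a
  have hq : q ∈ Icc 1 (n : ℤ) := mem_Icc.mpr ⟨by have := h.k_lt_q; omega, h.q_le_n⟩
  rw [sum_filter, sum_filter, ← add_sum_erase _ _ hq, ← add_sum_erase _ _ hq, h.comp_apply_q,
    h.apply_q, if_pos (by omega), if_pos (by omega)]
  rw [sum_congr rfl fun j hj => ?_]
  · ring
  obtain ⟨hjq, hj⟩ := mem_erase.mp hj
  rcases eq_or_ne j p with rfl | hjp
  · rw [h.comp_apply_p, h.apply_p, if_neg (by omega), if_neg (by omega)]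
  · rw [h.comp_apply_of_ne (mem_Icc.mp hj).1 hjp hjq]

theorem len_eq_len_comp_add_one (h : TypeB4Position n k w a b p q) :
    len n w = len n (w ∘ transposePair p (-q)) + 1 := by
  have hp : p ∈ Icc 1 (n : ℤ) := by
    have := h.one_le_p; have := h.p_le_k; have := h.k_lt_q; have := h.q_le_n
    exact mem_Icc.mpr ⟨by omega, by omega⟩
  have hinv := invCount_eq_add_card hp (filter_subset _ _)
    (fun j hj => by rw [mem_filter, mem_Ioo] at hj; rw [h.apply_p]; omega)
    (fun i hi j hj => h.lt_and_comp_lt_iff hi hj)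
  unfold len
  rw [hinv, h.sum_neg_entries_comp, Nat.cast_add, h.card_between]
  ring

theorem entriesLow_comp (h : TypeB4Position n k w a b p q) :
    entriesLow k (w ∘ transposePair p (-q)) = a ::ₘ (entriesLow k w).erase b := by
  have hp := h.one_le_p
  have hpk := h.p_le_k
  have hkq := h.k_lt_q
  rw [entriesLow, entriesLow, Multiset.map_eq_cons_erase_map (Icc 1 (k : ℤ)).nodup
    (mem_val.mpr (mem_Icc.mpr ⟨hp, hpk⟩)) (u := w), h.comp_apply_p, h.apply_p]
  intro j hj hjp
  rw [mem_val, mem_Icc] at hj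
  exact h.comp_apply_of_ne (by omega) hjp (by omega)

theorem entriesHigh_comp (h : TypeB4Position n k w a b p q) :
    entriesHigh n k (w ∘ transposePair p (-q)) = (-b) ::ₘ (entriesHigh n k w).erase (-a) := by
  have hpk := h.p_le_k
  have hkq := h.k_lt_q
  rw [entriesHigh, entriesHigh, Multiset.map_eq_cons_erase_map (Icc ((k : ℤ) + 1) n).nodup
    (mem_val.mpr (mem_Icc.mpr ⟨hkq, h.q_le_n⟩)) (u := w), h.comp_apply_q, h.apply_q]
  intro j hj hjq
  rw [mem_val, mem_Icc] at hj
  exact h.comp_apply_of_ne (by omega) (by omega) hjq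

end TypeB4Position

theorem stmt_8_general (n k : ℕ) (w : ℤ → ℤ)
    (hw : Grassmannian n k w) (a b : ℤ) (hb : 0 < b) (hba : b < a)
    (hbu : b ∈ entriesLow k w) (hna : (-a) ∈ entriesHigh n k w)
    (hmid : ∀ c : ℤ, b < c → c < a → c ∈ entriesHigh n k w) :
    ∃ w' : ℤ → ℤ, Grassmannian n k w' ∧
      entriesLow k w' = a ::ₘ (entriesLow k w).erase b ∧
      entriesHigh n k w' = (-b) ::ₘ (entriesHigh n k w).erase (-a) ∧
      Covers n w w' := by
  obtain ⟨p, hp, hwp⟩ := Multiset.mem_map.mp hbu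
  obtain ⟨q, hq, hwq⟩ := Multiset.mem_map.mp hna
  rw [mem_val, mem_Icc] at hp hq
  have h : TypeB4Position n k w a b p q :=
    ⟨hw, hp.1, hp.2, by omega, hq.2, hwp, hwq, hb, hba, hmid⟩
  exact ⟨_, h.grassmannian_comp, h.entriesLow_comp, h.entriesHigh_comp,
    _, h.isReflection, rfl, h.len_eq_len_comp_add_one⟩

/-- if `b` is an entry of `w` at a position `≤ k`, `-a` is an entry at a
position `> k`, `a > b > 0`, and every `c` with `b < c < a` is a positive entry of `w`
at a position `> k`, then the permutation `w'` obtained by replacing `b` with `a`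
among positions `≤ k` and `-a` with `-b` among positions `> k` belongs to `W_n^{(k)}`
and `w` covers `w'`. -/
theorem stmt_8 (n k : ℕ) (hn : 1 ≤ n) (hk : k ≤ n) (w : ℤ → ℤ)
    (hw : Grassmannian n k w) (a b : ℤ) (hb : 0 < b) (hba : b < a)
    (hbu : b ∈ entriesLow k w) (hna : (-a) ∈ entriesHigh n k w)
    (hmid : ∀ c : ℤ, b < c → c < a → c ∈ entriesHigh n k w) :
    ∃ w' : ℤ → ℤ, Grassmannian n k w' ∧
      entriesLow k w' = a ::ₘ (entriesLow k w).erase b ∧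
      entriesHigh n k w' = (-b) ::ₘ (entriesHigh n k w).erase (-a) ∧
      Covers n w w' :=
  stmt_8_general n k w hw a b hb hba hbu hna hmid
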